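/- Let $W$ be the Weyl group of a simply-laced (crystallographic, all roots of equal length) root system $\Phi$ with positive roots $\Phi_+$ and highest root $\alpha_0$. Then for any root $\alpha\in\Phi$, the minimum Coxeter length $d(\alpha_0,\alpha)$ of an element $w\in W$ with $w(\alpha_0)=\alpha$ equals $\mathrm{ht}(\alpha_0)-\mathrm{ht}(\alpha)$ if $\alpha\in\Phi_+$, and equals $\mathrm{ht}(\alpha_0)-\mathrm{ht}(\alpha)-1$ if $\alpha\in-\Phi_+$. -/

import Mathlib

/-!
Write `h'(β)` for the height of a root, raised by one when `β` is negative. A simple reflection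
`s_i` either fixes a root, adds or subtracts `α_i` (simply-laced case), or swaps `α_i` and `-α_i`;
in every case `h'` changes by at most one, so `d(α₀, α) ≥ h'(α₀) - h'(α)`. Conversely, every root
`β ≠ α₀` has negative inner product with some simple root `α_i`, and then `s_i β` has `h'` one
larger. For negative `β` this is immediate; for positive `β` it says that `α₀` is the only
dominant positive root, which rests on the connectedness of the Dynkin diagram (forcing `α₀` to
have full support). Climbing from `α` to `α₀` this way yields a word of length `h'(α₀) - h'(α)`.
-/

noncomputable section

/-- The standard inner product on `ℝ^ℓ`. -/
def rdot {ℓ : ℕ} (u v : Fin ℓ → ℝ) : ℝ := ∑ i, u i * v i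

/-- The orthogonal reflection of `v` in the hyperplane normal to `α`. -/
def rrefl {ℓ : ℕ} (α v : Fin ℓ → ℝ) : Fin ℓ → ℝ :=
  v - (2 * rdot v α / rdot α α) • α

/-- `Φ` is a (reduced) crystallographic root system in `ℝ^ℓ`: a finite set of nonzero
vectors, stable under the reflections in its elements, with integral Cartan numbers
`2(β,α)/(α,α) ∈ ℤ`, and with `±α` the only multiples of a root `α` that are roots. -/
structure IsCrystalRootSystem {ℓ : ℕ} (Φ : Finset (Fin ℓ → ℝ)) : Prop where
  nonzero : ∀ α ∈ Φ, α ≠ 0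
  stable : ∀ α ∈ Φ, ∀ β ∈ Φ, rrefl α β ∈ Φ
  crystal : ∀ α ∈ Φ, ∀ β ∈ Φ, ∃ k : ℤ, 2 * rdot β α = k * rdot α α
  reduced : ∀ α ∈ Φ, ∀ c : ℝ, c • α ∈ Φ → c = 1 ∨ c = -1

/-- `Φ` is irreducible: it admits no nontrivial partition into two mutually
orthogonal parts. -/
def IsIrreducibleRS {ℓ : ℕ} (Φ : Finset (Fin ℓ → ℝ)) : Prop :=
  ∀ A : Finset (Fin ℓ → ℝ), A ⊆ Φ →
    (∀ a ∈ A, ∀ b ∈ Φ, b ∉ A → rdot a b = 0) → A = ∅ ∨ A = Φ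

/-- All roots of `Φ` have equal length (together with crystallographic, this is the
"simply-laced" condition). -/
def IsEqualLengthRS {ℓ : ℕ} (Φ : Finset (Fin ℓ → ℝ)) : Prop :=
  ∀ α ∈ Φ, ∀ β ∈ Φ, rdot α α = rdot β β

/-- `Δ` is a base of simple roots for `Φ`, with (unique, by linear independence)
integral coefficient function `C`: every root `β` satisfies `β = ∑ i (C β i) • Δ i`
with the integers `C β i` either all nonnegative (`β` a positive root) or all
nonpositive (`β` a negative root). -/
def IsBase {ℓ : ℕ} (Φ : Finset (Fin ℓ → ℝ)) (Δ : Fin ℓ → (Fin ℓ → ℝ))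
    (C : (Fin ℓ → ℝ) → Fin ℓ → ℤ) : Prop :=
  (∀ i, Δ i ∈ Φ) ∧ LinearIndependent ℝ Δ ∧
    ∀ β ∈ Φ, (β = ∑ i, (C β i : ℝ) • Δ i) ∧ ((∀ i, 0 ≤ C β i) ∨ (∀ i, C β i ≤ 0))

/-- The height `ht(β) = ∑ i c_i` of a root `β = ∑ i c_i • Δ i`. -/
def htC {ℓ : ℕ} (C : (Fin ℓ → ℝ) → Fin ℓ → ℤ) (β : Fin ℓ → ℝ) : ℤ := ∑ i, C β i

end

noncomputable section

/-- Apply a word in the simple reflections (reflections in the simple roots `Δ i`)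
to the vector `v`. -/
def applyWord {ℓ : ℕ} (Δ : Fin ℓ → (Fin ℓ → ℝ)) (w : List (Fin ℓ)) (v : Fin ℓ → ℝ) :
    Fin ℓ → ℝ :=
  w.foldr (fun i u => rrefl (Δ i) u) v

/-- `d(α₀, α)`: the minimal Coxeter length of an element `w` of the Weyl group
(generated by the simple reflections) with `w(α₀) = α`, i.e. the least length of a
word in the simple reflections carrying `α₀` to `α`. -/
def wordDist {ℓ : ℕ} (Δ : Fin ℓ → (Fin ℓ → ℝ)) (α₀ α : Fin ℓ → ℝ) : ℕ :=
  sInf {k | ∃ w : List (Fin ℓ), w.length = k ∧ applyWord Δ w α₀ = α}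

section Reflection

variable {ℓ : ℕ}

lemma rdot_eq_dotProduct (u v : Fin ℓ → ℝ) : rdot u v = u ⬝ᵥ v := rfl

lemma rdot_comm (u v : Fin ℓ → ℝ) : rdot u v = rdot v u := dotProduct_comm u v

lemma rdot_neg_left (u v : Fin ℓ → ℝ) : rdot (-u) v = -rdot u v := neg_dotProduct u v

lemma rdot_self_pos {v : Fin ℓ → ℝ} (hv : v ≠ 0) : 0 < rdot v v := by
  refine lt_of_le_of_ne (Finset.sum_nonneg fun i _ => mul_self_nonneg (v i)) fun h => hv ?_
  exact dotProduct_self_eq_zero.mp h.symm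

lemma rrefl_neg (α v : Fin ℓ → ℝ) : rrefl α (-v) = -rrefl α v := by
  simp only [rrefl, rdot_eq_dotProduct, neg_dotProduct, mul_neg, neg_div, neg_smul]
  abel

lemma rrefl_self {α : Fin ℓ → ℝ} (hα : α ≠ 0) : rrefl α α = -α := by
  rw [rrefl, mul_div_assoc, div_self (rdot_self_pos hα).ne', mul_one, two_smul]
  abel

lemma rdot_rrefl_left {α : Fin ℓ → ℝ} (hα : α ≠ 0) (v : Fin ℓ → ℝ) :
    rdot (rrefl α v) α = -rdot v α := by
  have hN := (rdot_self_pos hα).ne'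
  simp only [rrefl, rdot_eq_dotProduct, sub_dotProduct, smul_dotProduct, smul_eq_mul] at hN ⊢
  field_simp
  ring

lemma rrefl_rrefl {α : Fin ℓ → ℝ} (hα : α ≠ 0) (v : Fin ℓ → ℝ) : rrefl α (rrefl α v) = v := by
  conv_lhs => rw [rrefl, rdot_rrefl_left hα]
  rw [rrefl, mul_neg, neg_div, neg_smul, sub_neg_eq_add, sub_add_cancel]

lemma rrefl_of_two_mul_rdot_eq {α v : Fin ℓ → ℝ} {k : ℝ} (hα : α ≠ 0)
    (hk : 2 * rdot v α = k * rdot α α) : rrefl α v = v - k • α := by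
  rw [rrefl, hk, mul_div_assoc, div_self (rdot_self_pos hα).ne', mul_one]

end Reflection

section RootPairs

variable {ℓ : ℕ} {Φ : Finset (Fin ℓ → ℝ)} {α β : Fin ℓ → ℝ}

lemma IsCrystalRootSystem.neg_mem (hΦ : IsCrystalRootSystem Φ) (hα : α ∈ Φ) : -α ∈ Φ :=
  rrefl_self (hΦ.nonzero α hα) ▸ hΦ.stable α hα α hα

lemma eq_of_rdot_eq_rdot_self (hsl : IsEqualLengthRS Φ) (hα : α ∈ Φ) (hβ : β ∈ Φ)
    (h : rdot β α = rdot α α) : β = α := by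
  have hβα : rdot (β - α) (β - α) = 0 := by
    have := hsl β hβ α hα
    simp only [rdot_eq_dotProduct, sub_dotProduct, dotProduct_sub, dotProduct_comm α β] at this h ⊢
    linarith
  exact sub_eq_zero.mp (dotProduct_self_eq_zero.mp hβα)

lemma two_mul_rdot_eq_of_pos (hΦ : IsCrystalRootSystem Φ) (hsl : IsEqualLengthRS Φ)
    (hα : α ∈ Φ) (hβ : β ∈ Φ) (hpos : 0 < rdot β α) (hne : β ≠ α) :
    2 * rdot β α = rdot α α := by
  obtain ⟨k, hk⟩ := hΦ.crystal α hα β hβ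
  have hN := rdot_self_pos (hΦ.nonzero α hα)
  have hk_pos : (0 : ℝ) < k := pos_of_mul_pos_left (hk ▸ by linarith) hN.le
  have hk_le : (k : ℝ) ≤ 2 := by
    have hlen := hsl β hβ α hα
    have hsq : 0 ≤ rdot (β - α) (β - α) := Finset.sum_nonneg fun i _ => mul_self_nonneg _
    simp only [rdot_eq_dotProduct, sub_dotProduct, dotProduct_sub, dotProduct_comm α β]
      at hsq hlen hk hN
    nlinarith
  have hk_ne : (k : ℝ) ≠ 2 := fun h2 =>
    hne (eq_of_rdot_eq_rdot_self hsl hα hβ (by rw [h2] at hk; linarith))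
  have hk1 : k = 1 := by
    have : (0 : ℤ) < k ∧ k < 2 := by
      constructor <;> [exact_mod_cast hk_pos; exact_mod_cast lt_of_le_of_ne hk_le hk_ne]
    omega
  rw [hk, hk1, Int.cast_one, one_mul]

lemma rrefl_eq_add_of_neg (hΦ : IsCrystalRootSystem Φ) (hsl : IsEqualLengthRS Φ)
    (hα : α ∈ Φ) (hβ : β ∈ Φ) (hneg : rdot β α < 0) (hne : β ≠ -α) :
    rrefl α β = β + α := by
  have h := two_mul_rdot_eq_of_pos hΦ hsl hα (hΦ.neg_mem hβ)
    (by rwa [rdot_neg_left, neg_pos]) (fun h => hne (neg_eq_iff_eq_neg.mp h))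
  rw [rdot_neg_left] at h
  rw [rrefl_of_two_mul_rdot_eq (k := -1) (hΦ.nonzero α hα) (by linarith)]
  simp [sub_eq_add_neg]

lemma add_mem_of_rdot_neg (hΦ : IsCrystalRootSystem Φ) (hsl : IsEqualLengthRS Φ)
    (hα : α ∈ Φ) (hβ : β ∈ Φ) (hneg : rdot β α < 0) (hne : β ≠ -α) : β + α ∈ Φ :=
  rrefl_eq_add_of_neg hΦ hsl hα hβ hneg hne ▸ hΦ.stable α hα β hβ

lemma sub_mem_of_rdot_pos (hΦ : IsCrystalRootSystem Φ) (hsl : IsEqualLengthRS Φ)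
    (hα : α ∈ Φ) (hβ : β ∈ Φ) (hpos : 0 < rdot β α) (hne : β ≠ α) : β - α ∈ Φ := by
  have h := add_mem_of_rdot_neg hΦ hsl hα (hΦ.neg_mem hβ)
    (by rwa [rdot_neg_left, neg_neg_iff_pos]) (fun h => hne (neg_inj.mp h))
  simpa [neg_add_eq_sub] using hΦ.neg_mem h

end RootPairs

namespace IsBase

variable {ℓ : ℕ} {Φ : Finset (Fin ℓ → ℝ)} {Δ : Fin ℓ → (Fin ℓ → ℝ)}
  {C : (Fin ℓ → ℝ) → Fin ℓ → ℤ} {β γ v : Fin ℓ → ℝ}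

lemma simple_mem (hbase : IsBase Φ Δ C) (i : Fin ℓ) : Δ i ∈ Φ := hbase.1 i

lemma eq_sum (hbase : IsBase Φ Δ C) (hβ : β ∈ Φ) : β = ∑ i, (C β i : ℝ) • Δ i :=
  (hbase.2.2 β hβ).1

lemma nonneg_or_nonpos (hbase : IsBase Φ Δ C) (hβ : β ∈ Φ) :
    (∀ i, 0 ≤ C β i) ∨ ∀ i, C β i ≤ 0 :=
  (hbase.2.2 β hβ).2

lemma coeff_eq (hbase : IsBase Φ Δ C) (hβ : β ∈ Φ) {c : Fin ℓ → ℤ}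
    (h : β = ∑ i, (c i : ℝ) • Δ i) : C β = c := by
  funext i
  exact_mod_cast Fintype.linearIndependent_iffₛ.mp hbase.2.1 _ _ ((hbase.eq_sum hβ).symm.trans h) i

lemma coeff_simple (hbase : IsBase Φ Δ C) (j : Fin ℓ) : C (Δ j) = Pi.single j 1 :=
  hbase.coeff_eq (hbase.simple_mem j) (by simp [Pi.single_apply])

lemma coeff_neg (hbase : IsBase Φ Δ C) (hβ : β ∈ Φ) (hnβ : -β ∈ Φ) : C (-β) = -C β :=
  hbase.coeff_eq hnβ <| by
    conv_lhs => rw [hbase.eq_sum hβ]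
    simp [Finset.sum_neg_distrib]

lemma coeff_add (hbase : IsBase Φ Δ C) (hβ : β ∈ Φ) (hγ : γ ∈ Φ) (hβγ : β + γ ∈ Φ) :
    C (β + γ) = C β + C γ :=
  hbase.coeff_eq hβγ <| by
    conv_lhs => rw [hbase.eq_sum hβ, hbase.eq_sum hγ]
    simp [add_smul, Finset.sum_add_distrib]

lemma exists_coeff_ne_zero (hΦ : IsCrystalRootSystem Φ) (hbase : IsBase Φ Δ C)
    (hβ : β ∈ Φ) : ∃ i, C β i ≠ 0 := by
  by_contra! h
  exact hΦ.nonzero β hβ (by rw [hbase.eq_sum hβ]; simp [h])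

lemma rdot_eq_sum_coeff (hbase : IsBase Φ Δ C) (hβ : β ∈ Φ) (v : Fin ℓ → ℝ) :
    rdot β v = ∑ i, (C β i : ℝ) * rdot (Δ i) v := by
  conv_lhs => rw [hbase.eq_sum hβ]
  simp [rdot_eq_dotProduct, sum_dotProduct, smul_dotProduct]

lemma support_coeff_simple (hbase : IsBase Φ Δ C) (i : Fin ℓ) :
    Function.support (C (Δ i)) = {i} := by
  rw [hbase.coeff_simple]
  exact Pi.support_single_of_ne one_ne_zero

lemma htC_add (hbase : IsBase Φ Δ C) (hβ : β ∈ Φ) (hγ : γ ∈ Φ) (hβγ : β + γ ∈ Φ) :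
    htC C (β + γ) = htC C β + htC C γ := by
  simp [htC, hbase.coeff_add hβ hγ hβγ, Finset.sum_add_distrib]

lemma htC_neg (hbase : IsBase Φ Δ C) (hβ : β ∈ Φ) (hnβ : -β ∈ Φ) :
    htC C (-β) = -htC C β := by
  simp [htC, hbase.coeff_neg hβ hnβ]

lemma htC_simple (hbase : IsBase Φ Δ C) (j : Fin ℓ) : htC C (Δ j) = 1 := by
  simp [htC, hbase.coeff_simple j]

lemma htC_add_simple (hbase : IsBase Φ Δ C) (hβ : β ∈ Φ) {i : Fin ℓ} (hβi : β + Δ i ∈ Φ) :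
    htC C (β + Δ i) = htC C β + 1 := by
  rw [hbase.htC_add hβ (hbase.simple_mem i) hβi, hbase.htC_simple]

lemma htC_pos_of_nonneg (hΦ : IsCrystalRootSystem Φ) (hbase : IsBase Φ Δ C) (hβ : β ∈ Φ)
    (h : ∀ i, 0 ≤ C β i) : 0 < htC C β := by
  obtain ⟨i, hi⟩ := hbase.exists_coeff_ne_zero hΦ hβ
  exact Finset.sum_pos' (fun j _ => h j) ⟨i, Finset.mem_univ i, lt_of_le_of_ne (h i) hi.symm⟩

lemma htC_neg_of_nonpos (hΦ : IsCrystalRootSystem Φ) (hbase : IsBase Φ Δ C) (hβ : β ∈ Φ)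
    (h : ∀ i, C β i ≤ 0) : htC C β < 0 := by
  obtain ⟨i, hi⟩ := hbase.exists_coeff_ne_zero hΦ hβ
  exact Finset.sum_neg' (fun j _ => h j) ⟨i, Finset.mem_univ i, lt_of_le_of_ne (h i) hi⟩

lemma nonneg_iff_htC_pos (hΦ : IsCrystalRootSystem Φ) (hbase : IsBase Φ Δ C) (hβ : β ∈ Φ) :
    (∀ i, 0 ≤ C β i) ↔ 0 < htC C β :=
  ⟨hbase.htC_pos_of_nonneg hΦ hβ, fun h => (hbase.nonneg_or_nonpos hβ).resolve_right
    fun hn => (hbase.htC_neg_of_nonpos hΦ hβ hn).not_gt h⟩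

lemma htC_ne_zero (hΦ : IsCrystalRootSystem Φ) (hbase : IsBase Φ Δ C) (hβ : β ∈ Φ) :
    htC C β ≠ 0 :=
  (hbase.nonneg_or_nonpos hβ).elim (fun h => (hbase.htC_pos_of_nonneg hΦ hβ h).ne')
    fun h => (hbase.htC_neg_of_nonpos hΦ hβ h).ne

lemma exists_coeff_pos_rdot_pos (hΦ : IsCrystalRootSystem Φ) (hbase : IsBase Φ Δ C)
    (hβ : β ∈ Φ) (h : ∀ i, 0 ≤ C β i) : ∃ i, 0 < C β i ∧ 0 < rdot β (Δ i) := by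
  have hsum : ∑ _i : Fin ℓ, (0 : ℝ) < ∑ i, (C β i : ℝ) * rdot (Δ i) β := by
    rw [← hbase.rdot_eq_sum_coeff hβ, Finset.sum_const_zero]
    exact rdot_self_pos (hΦ.nonzero β hβ)
  obtain ⟨i, -, hi⟩ := Finset.exists_lt_of_sum_lt hsum
  rw [rdot_comm] at hi
  rcases pos_and_pos_or_neg_and_neg_of_mul_pos hi with ⟨hc, hr⟩ | ⟨hc, -⟩
  · exact ⟨i, by exact_mod_cast hc, hr⟩
  · exact absurd (h i) (by exact_mod_cast hc.not_ge)

lemma rdot_nonneg_of_dominant (hbase : IsBase Φ Δ C) (hβ : β ∈ Φ) (h : ∀ i, 0 ≤ C β i)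
    (hv : ∀ i, 0 ≤ rdot v (Δ i)) : 0 ≤ rdot β v := by
  rw [hbase.rdot_eq_sum_coeff hβ]
  exact Finset.sum_nonneg fun i _ => mul_nonneg (by exact_mod_cast h i) (rdot_comm v _ ▸ hv i)

lemma rdot_simple_nonpos (hΦ : IsCrystalRootSystem Φ) (hsl : IsEqualLengthRS Φ)
    (hbase : IsBase Φ Δ C) {i j : Fin ℓ} (hij : i ≠ j) : rdot (Δ i) (Δ j) ≤ 0 := by
  by_contra! h
  have hmem := sub_mem_of_rdot_pos hΦ hsl (hbase.simple_mem j) (hbase.simple_mem i) h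
    (hbase.2.1.injective.ne hij)
  have hC := hbase.coeff_add hmem (hbase.simple_mem j) (by simpa using hbase.simple_mem i)
  rw [sub_add_cancel, hbase.coeff_simple, hbase.coeff_simple] at hC
  have hCi := congrFun hC i
  have hCj := congrFun hC j
  simp [hij, hij.symm] at hCi hCj
  rcases hbase.nonneg_or_nonpos hmem with hp | hn
  · linarith [hp j]
  · linarith [hn i]

end IsBase

/-- `S` is a union of connected components of the Dynkin diagram of `Δ`. -/
def IsOrthogonalSplit {ℓ : ℕ} (Δ : Fin ℓ → (Fin ℓ → ℝ)) (S : Set (Fin ℓ)) : Prop :=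
  ∀ i ∈ S, ∀ j ∉ S, rdot (Δ i) (Δ j) = 0

section Connected

open Function

variable {ℓ : ℕ} {Φ : Finset (Fin ℓ → ℝ)} {Δ : Fin ℓ → (Fin ℓ → ℝ)}
  {C : (Fin ℓ → ℝ) → Fin ℓ → ℤ} {S : Set (Fin ℓ)} {β γ : Fin ℓ → ℝ}

lemma IsOrthogonalSplit.compl (hS : IsOrthogonalSplit Δ S) : IsOrthogonalSplit Δ Sᶜ :=
  fun i hi j hj => by
    rw [rdot_comm]
    exact hS j (not_not.mp hj) i hi

lemma rdot_eq_zero_of_support_subset (hbase : IsBase Φ Δ C)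
    (hS : IsOrthogonalSplit Δ S) (hβ : β ∈ Φ) (hγ : γ ∈ Φ)
    (hβS : support (C β) ⊆ S) (hγS : support (C γ) ⊆ Sᶜ) : rdot β γ = 0 := by
  rw [hbase.rdot_eq_sum_coeff hβ]
  refine Finset.sum_eq_zero fun m _ => ?_
  by_cases hm : m ∈ S
  · rw [rdot_comm, hbase.rdot_eq_sum_coeff hγ, Finset.sum_eq_zero, mul_zero]
    intro n _
    by_cases hn : n ∈ S
    · rw [notMem_support.mp (fun h => hγS h hn), Int.cast_zero, zero_mul]
    · rw [rdot_comm, hS m hm n hn, mul_zero]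
  · rw [notMem_support.mp (fun h => hm (hβS h)), Int.cast_zero, zero_mul]

lemma support_subset_or_eq_simple_of_add (hsl : IsEqualLengthRS Φ) (hbase : IsBase Φ Δ C)
    (hS : IsOrthogonalSplit Δ S) (hγ : γ ∈ Φ) (hγS : support (C γ) ⊆ S)
    {i : Fin ℓ} (hγi : γ + Δ i ∈ Φ) : support (C (γ + Δ i)) ⊆ S ∨ γ + Δ i = Δ i := by
  by_cases hi : i ∈ S
  · left
    rw [hbase.coeff_add hγ (hbase.simple_mem i) hγi]
    refine (support_add _ _).trans (Set.union_subset hγS ?_)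
    rwa [hbase.support_coeff_simple, Set.singleton_subset_iff]
  · right
    have hγΔ : rdot γ (Δ i) = 0 := rdot_eq_zero_of_support_subset hbase hS hγ
      (hbase.simple_mem i) hγS (by rwa [hbase.support_coeff_simple, Set.singleton_subset_iff])
    refine eq_of_rdot_eq_rdot_self hsl (hbase.simple_mem i) hγi ?_
    simpa [rdot_eq_dotProduct, add_dotProduct] using hγΔ

lemma support_simple_subset_or_compl (hbase : IsBase Φ Δ C) (i : Fin ℓ) :
    support (C (Δ i)) ⊆ S ∨ support (C (Δ i)) ⊆ Sᶜ := by
  simp only [hbase.support_coeff_simple, Set.singleton_subset_iff, Set.mem_compl_iff]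
  exact em _

/-- Removing a suitable simple root lowers the height by one, and by
`support_subset_or_eq_simple_of_add` putting it back cannot make the support straddle `S`. -/
lemma support_subset_or_compl_of_nonneg (hΦ : IsCrystalRootSystem Φ) (hsl : IsEqualLengthRS Φ)
    (hbase : IsBase Φ Δ C) (hS : IsOrthogonalSplit Δ S) (n : ℕ) :
    ∀ β ∈ Φ, (∀ i, 0 ≤ C β i) → htC C β = n →
      support (C β) ⊆ S ∨ support (C β) ⊆ Sᶜ := by
  induction n with
  | zero => exact fun β hβ hpos hn => absurd hn (hbase.htC_pos_of_nonneg hΦ hβ hpos).ne'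
  | succ n ih =>
    intro β hβ hpos hn
    obtain ⟨i, -, hi⟩ := hbase.exists_coeff_pos_rdot_pos hΦ hβ hpos
    by_cases hβi : β = Δ i
    · exact hβi ▸ support_simple_subset_or_compl hbase i
    have hγ : β - Δ i ∈ Φ := sub_mem_of_rdot_pos hΦ hsl (hbase.simple_mem i) hβ hi hβi
    have hγi : β - Δ i + Δ i = β := sub_add_cancel β (Δ i)
    have hht := hbase.htC_add_simple hγ (hγi ▸ hβ)
    rw [hγi] at hht
    have hγpos : ∀ j, 0 ≤ C (β - Δ i) j := (hbase.nonneg_iff_htC_pos hΦ hγ).mpr <| by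
      have := hbase.htC_ne_zero hΦ hγ
      omega
    rcases ih _ hγ hγpos (by omega) with h | h
    · have := support_subset_or_eq_simple_of_add hsl hbase hS hγ h (hγi ▸ hβ)
      rw [hγi] at this
      exact Or.inl (this.resolve_right hβi)
    · have := support_subset_or_eq_simple_of_add hsl hbase hS.compl hγ h (hγi ▸ hβ)
      rw [hγi] at this
      exact Or.inr (this.resolve_right hβi)

lemma support_subset_or_compl (hΦ : IsCrystalRootSystem Φ) (hsl : IsEqualLengthRS Φ)
    (hbase : IsBase Φ Δ C) (hS : IsOrthogonalSplit Δ S) (hβ : β ∈ Φ) :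
    support (C β) ⊆ S ∨ support (C β) ⊆ Sᶜ := by
  rcases hbase.nonneg_or_nonpos hβ with h | h
  · exact support_subset_or_compl_of_nonneg hΦ hsl hbase hS _ β hβ h
      (Int.toNat_of_nonneg (hbase.htC_pos_of_nonneg hΦ hβ h).le).symm
  · have hnβ := hΦ.neg_mem hβ
    have hnpos : ∀ i, 0 ≤ C (-β) i := by
      simpa [hbase.coeff_neg hβ hnβ] using h
    have := support_subset_or_compl_of_nonneg hΦ hsl hbase hS _ (-β) hnβ hnpos
      (Int.toNat_of_nonneg (hbase.htC_pos_of_nonneg hΦ hnβ hnpos).le).symm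
    rwa [hbase.coeff_neg hβ hnβ, support_neg] at this

lemma IsOrthogonalSplit.eq_univ (hS : IsOrthogonalSplit Δ S) (hΦ : IsCrystalRootSystem Φ)
    (hirr : IsIrreducibleRS Φ) (hsl : IsEqualLengthRS Φ) (hbase : IsBase Φ Δ C)
    (hne : S.Nonempty) : S = Set.univ := by
  classical
  set A := Φ.filter fun β => support (C β) ⊆ S
  have hA : ∀ a ∈ A, ∀ b ∈ Φ, b ∉ A → rdot a b = 0 := by
    intro a ha b hb hbA
    rw [Finset.mem_filter] at ha hbA
    exact rdot_eq_zero_of_support_subset hbase hS ha.1 hb ha.2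
      ((support_subset_or_compl hΦ hsl hbase hS hb).resolve_left fun h => hbA ⟨hb, h⟩)
  have hsimple : ∀ i, Δ i ∈ A ↔ i ∈ S := fun i => by
    rw [Finset.mem_filter, hbase.support_coeff_simple, Set.singleton_subset_iff]
    exact and_iff_right (hbase.simple_mem i)
  rcases hirr A (Finset.filter_subset _ _) hA with h | h
  · obtain ⟨i, hi⟩ := hne
    simpa [h] using (hsimple i).mpr hi
  · exact Set.eq_univ_of_forall fun j => (hsimple j).mp (h ▸ hbase.simple_mem j)

end Connected

section Highest

variable {ℓ : ℕ} {Φ : Finset (Fin ℓ → ℝ)} {Δ : Fin ℓ → (Fin ℓ → ℝ)}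
  {C : (Fin ℓ → ℝ) → Fin ℓ → ℤ} {α₀ β : Fin ℓ → ℝ}

lemma htC_highest_pos (hΦ : IsCrystalRootSystem Φ) (hbase : IsBase Φ Δ C) (hα₀ : α₀ ∈ Φ)
    (hhighest : ∀ β ∈ Φ, htC C β ≤ htC C α₀) : 0 < htC C α₀ := by
  have hneg := hhighest _ (hΦ.neg_mem hα₀)
  rw [hbase.htC_neg hα₀ (hΦ.neg_mem hα₀)] at hneg
  have := hbase.htC_ne_zero hΦ hα₀
  omega

lemma rdot_highest_simple_nonneg (hΦ : IsCrystalRootSystem Φ) (hsl : IsEqualLengthRS Φ)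
    (hbase : IsBase Φ Δ C) (hα₀ : α₀ ∈ Φ) (hhighest : ∀ β ∈ Φ, htC C β ≤ htC C α₀)
    (i : Fin ℓ) : 0 ≤ rdot α₀ (Δ i) := by
  by_contra! h
  have hne : α₀ ≠ -Δ i := fun he => by
    have := htC_highest_pos hΦ hbase hα₀ hhighest
    rw [he, hbase.htC_neg (hbase.simple_mem i) (hΦ.neg_mem (hbase.simple_mem i)),
      hbase.htC_simple] at this
    omega
  have hmem := add_mem_of_rdot_neg hΦ hsl (hbase.simple_mem i) hα₀ h hne
  have := hhighest _ hmem
  rw [hbase.htC_add_simple hα₀ hmem] at this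
  omega

/-- The support of `α₀` is orthogonal to its complement, because `α₀` is dominant and distinct
simple roots make obtuse angles. -/
lemma highest_coeff_pos (hΦ : IsCrystalRootSystem Φ) (hirr : IsIrreducibleRS Φ)
    (hsl : IsEqualLengthRS Φ) (hbase : IsBase Φ Δ C) (hα₀ : α₀ ∈ Φ)
    (hhighest : ∀ β ∈ Φ, htC C β ≤ htC C α₀) (i : Fin ℓ) : 0 < C α₀ i := by
  have hpos := (hbase.nonneg_iff_htC_pos hΦ hα₀).mpr (htC_highest_pos hΦ hbase hα₀ hhighest)
  have hS : IsOrthogonalSplit Δ {i | 0 < C α₀ i} := by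
    intro k hk j hj
    have hj0 : C α₀ j = 0 := le_antisymm (not_lt.mp hj) (hpos j)
    have hterm : ∀ m ∈ Finset.univ, (C α₀ m : ℝ) * rdot (Δ m) (Δ j) ≤ 0 := fun m _ => by
      rcases eq_or_ne m j with rfl | hmj
      · simp [hj0]
      · exact mul_nonpos_of_nonneg_of_nonpos (by exact_mod_cast hpos m)
          (hbase.rdot_simple_nonpos hΦ hsl hmj)
    have hsum : ∑ m, (C α₀ m : ℝ) * rdot (Δ m) (Δ j) = 0 :=
      le_antisymm (Finset.sum_nonpos hterm) (hbase.rdot_eq_sum_coeff hα₀ _ ▸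
        rdot_highest_simple_nonneg hΦ hsl hbase hα₀ hhighest j)
    have := (Finset.sum_eq_zero_iff_of_nonpos hterm).mp hsum k (Finset.mem_univ k)
    exact (mul_eq_zero.mp this).resolve_left (by exact_mod_cast (show 0 < C α₀ k from hk).ne')
  have hne : {i | 0 < C α₀ i}.Nonempty := by
    obtain ⟨k, hk⟩ := hbase.exists_coeff_ne_zero hΦ hα₀
    exact ⟨k, lt_of_le_of_ne (hpos k) hk.symm⟩
  exact Set.eq_univ_iff_forall.mp (hS.eq_univ hΦ hirr hsl hbase hne) i

lemma eq_highest_of_dominant (hΦ : IsCrystalRootSystem Φ) (hirr : IsIrreducibleRS Φ)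
    (hsl : IsEqualLengthRS Φ) (hbase : IsBase Φ Δ C) (hα₀ : α₀ ∈ Φ)
    (hhighest : ∀ β ∈ Φ, htC C β ≤ htC C α₀) (hβ : β ∈ Φ) (hpos : ∀ i, 0 ≤ C β i)
    (hdom : ∀ i, 0 ≤ rdot β (Δ i)) : β = α₀ := by
  by_contra hne
  have hprod : 0 < rdot α₀ β := by
    obtain ⟨i, -, hi⟩ := hbase.exists_coeff_pos_rdot_pos hΦ hβ hpos
    have hα₀pos := highest_coeff_pos hΦ hirr hsl hbase hα₀ hhighest
    rw [hbase.rdot_eq_sum_coeff hα₀]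
    refine Finset.sum_pos' (fun m _ => mul_nonneg ?_ (rdot_comm β _ ▸ hdom m))
      ⟨i, Finset.mem_univ i, mul_pos ?_ (rdot_comm β _ ▸ hi)⟩
    · exact_mod_cast (hα₀pos m).le
    · exact_mod_cast hα₀pos i
  have hcartan := two_mul_rdot_eq_of_pos hΦ hsl hβ hα₀ hprod (Ne.symm hne)
  have hδ := sub_mem_of_rdot_pos hΦ hsl hβ hα₀ hprod (Ne.symm hne)
  rcases hbase.nonneg_or_nonpos hδ with h | h
  · -- `⟨α₀ - β, β⟩ = -⟨β, β⟩ / 2 < 0`, against the dominance of `β`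
    have hδβ := hbase.rdot_nonneg_of_dominant hδ h hdom
    have hN := rdot_self_pos (hΦ.nonzero β hβ)
    simp only [rdot_eq_dotProduct, sub_dotProduct] at hδβ hcartan hN
    linarith
  · have hsum := hbase.htC_add hδ hβ (by rwa [sub_add_cancel])
    rw [sub_add_cancel] at hsum
    have := hbase.htC_neg_of_nonpos hΦ hδ h
    have := hhighest β hβ
    omega

lemma exists_rdot_simple_neg (hΦ : IsCrystalRootSystem Φ) (hirr : IsIrreducibleRS Φ)
    (hsl : IsEqualLengthRS Φ) (hbase : IsBase Φ Δ C) (hα₀ : α₀ ∈ Φ)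
    (hhighest : ∀ β ∈ Φ, htC C β ≤ htC C α₀) (hβ : β ∈ Φ) (hne : β ≠ α₀) :
    ∃ i, rdot β (Δ i) < 0 := by
  rcases hbase.nonneg_or_nonpos hβ with h | h
  · by_contra! hdom
    exact hne (eq_highest_of_dominant hΦ hirr hsl hbase hα₀ hhighest hβ h hdom)
  · have hnβ := hΦ.neg_mem hβ
    obtain ⟨i, -, hi⟩ := hbase.exists_coeff_pos_rdot_pos hΦ hnβ
      (by simpa [hbase.coeff_neg hβ hnβ] using h)
    rw [rdot_neg_left, neg_pos] at hi
    exact ⟨i, hi⟩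

end Highest

/-- Negative roots lie one reflection further from `α₀` than their height suggests: the simple
reflection `s_i` exchanges `α_i` (height `1`) and `-α_i` (height `-1`) in a single step. -/
def shiftedHt {ℓ : ℕ} (C : (Fin ℓ → ℝ) → Fin ℓ → ℤ) (β : Fin ℓ → ℝ) : ℤ :=
  if 0 < htC C β then htC C β else htC C β + 1

section Words

variable {ℓ : ℕ} {Φ : Finset (Fin ℓ → ℝ)} {Δ : Fin ℓ → (Fin ℓ → ℝ)}
  {C : (Fin ℓ → ℝ) → Fin ℓ → ℤ} {α₀ β v : Fin ℓ → ℝ}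

lemma shiftedHt_of_pos (h : 0 < htC C β) : shiftedHt C β = htC C β := if_pos h

lemma shiftedHt_of_neg (h : htC C β < 0) : shiftedHt C β = htC C β + 1 := if_neg h.not_gt

lemma shiftedHt_add_simple (hΦ : IsCrystalRootSystem Φ) (hbase : IsBase Φ Δ C) (hβ : β ∈ Φ)
    {i : Fin ℓ} (hβi : β + Δ i ∈ Φ) : shiftedHt C (β + Δ i) = shiftedHt C β + 1 := by
  have h₁ := hbase.htC_ne_zero hΦ hβ
  have h₂ := hbase.htC_ne_zero hΦ hβi
  rw [hbase.htC_add_simple hβ hβi] at h₂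
  unfold shiftedHt
  rw [hbase.htC_add_simple hβ hβi]
  split_ifs <;> omega

lemma shiftedHt_rrefl_of_rdot_neg (hΦ : IsCrystalRootSystem Φ) (hsl : IsEqualLengthRS Φ)
    (hbase : IsBase Φ Δ C) (hβ : β ∈ Φ) {i : Fin ℓ} (h : rdot β (Δ i) < 0) :
    shiftedHt C (rrefl (Δ i) β) = shiftedHt C β + 1 := by
  have hi := hbase.simple_mem i
  by_cases hβi : β = -Δ i
  · subst hβi
    rw [rrefl_neg, rrefl_self (hΦ.nonzero _ hi), neg_neg,
      shiftedHt_of_pos (hbase.htC_simple i ▸ one_pos),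
      shiftedHt_of_neg (by rw [hbase.htC_neg hi hβ, hbase.htC_simple]; exact neg_one_lt_zero),
      hbase.htC_neg hi hβ, hbase.htC_simple]
    rfl
  · rw [rrefl_eq_add_of_neg hΦ hsl hi hβ h hβi]
    exact shiftedHt_add_simple hΦ hbase hβ (add_mem_of_rdot_neg hΦ hsl hi hβ h hβi)

lemma shiftedHt_le_rrefl_add_one (hΦ : IsCrystalRootSystem Φ) (hsl : IsEqualLengthRS Φ)
    (hbase : IsBase Φ Δ C) (hβ : β ∈ Φ) (i : Fin ℓ) :
    shiftedHt C β ≤ shiftedHt C (rrefl (Δ i) β) + 1 := by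
  have hΔ := hΦ.nonzero _ (hbase.simple_mem i)
  rcases lt_trichotomy (rdot β (Δ i)) 0 with h | h | h
  · rw [shiftedHt_rrefl_of_rdot_neg hΦ hsl hbase hβ h]
    omega
  · rw [rrefl_of_two_mul_rdot_eq (k := 0) hΔ (by simp [h])]
    simp
  · have hs := shiftedHt_rrefl_of_rdot_neg hΦ hsl hbase (hΦ.stable _ (hbase.simple_mem i) β hβ)
      (by rw [rdot_rrefl_left hΔ]; exact neg_neg_iff_pos.mpr h)
    rw [rrefl_rrefl hΔ] at hs
    omega

lemma applyWord_cons (i : Fin ℓ) (w : List (Fin ℓ)) (v : Fin ℓ → ℝ) :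
    applyWord Δ (i :: w) v = rrefl (Δ i) (applyWord Δ w v) := rfl

lemma applyWord_mem (hΦ : IsCrystalRootSystem Φ) (hbase : IsBase Φ Δ C) (hv : v ∈ Φ)
    (w : List (Fin ℓ)) : applyWord Δ w v ∈ Φ := by
  induction w with
  | nil => exact hv
  | cons i w ih => exact hΦ.stable _ (hbase.simple_mem i) _ ih

lemma shiftedHt_sub_length_le (hΦ : IsCrystalRootSystem Φ) (hsl : IsEqualLengthRS Φ)
    (hbase : IsBase Φ Δ C) (hv : v ∈ Φ) (w : List (Fin ℓ)) :
    shiftedHt C v - w.length ≤ shiftedHt C (applyWord Δ w v) := by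
  induction w with
  | nil => simp [applyWord]
  | cons i w ih =>
    have := shiftedHt_le_rrefl_add_one hΦ hsl hbase (applyWord_mem hΦ hbase hv w) i
    rw [applyWord_cons, List.length_cons]
    push_cast
    omega

lemma shiftedHt_le_highest (hΦ : IsCrystalRootSystem Φ) (hbase : IsBase Φ Δ C) (hα₀ : α₀ ∈ Φ)
    (hhighest : ∀ β ∈ Φ, htC C β ≤ htC C α₀) (hβ : β ∈ Φ) : shiftedHt C β ≤ shiftedHt C α₀ := by
  have := htC_highest_pos hΦ hbase hα₀ hhighest
  have := hhighest β hβ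
  unfold shiftedHt
  split_ifs <;> omega

lemma exists_word_of_shiftedHt_sub_eq (hΦ : IsCrystalRootSystem Φ) (hirr : IsIrreducibleRS Φ)
    (hsl : IsEqualLengthRS Φ) (hbase : IsBase Φ Δ C) (hα₀ : α₀ ∈ Φ)
    (hhighest : ∀ β ∈ Φ, htC C β ≤ htC C α₀) (n : ℕ) :
    ∀ β ∈ Φ, shiftedHt C α₀ - shiftedHt C β = n →
      ∃ w : List (Fin ℓ), w.length = n ∧ applyWord Δ w α₀ = β := by
  induction n with
  | zero =>
    intro β hβ hn
    refine ⟨[], rfl, by_contra fun hne => ?_⟩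
    obtain ⟨i, hi⟩ := exists_rdot_simple_neg hΦ hirr hsl hbase hα₀ hhighest hβ (Ne.symm hne)
    have := shiftedHt_rrefl_of_rdot_neg hΦ hsl hbase hβ hi
    have := shiftedHt_le_highest hΦ hbase hα₀ hhighest (hΦ.stable _ (hbase.simple_mem i) β hβ)
    omega
  | succ n ih =>
    intro β hβ hn
    have hne : β ≠ α₀ := by
      rintro rfl
      omega
    obtain ⟨i, hi⟩ := exists_rdot_simple_neg hΦ hirr hsl hbase hα₀ hhighest hβ hne
    have hup := shiftedHt_rrefl_of_rdot_neg hΦ hsl hbase hβ hi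
    obtain ⟨w, hw, happ⟩ := ih _ (hΦ.stable _ (hbase.simple_mem i) β hβ) (by push_cast at hn; omega)
    refine ⟨i :: w, by rw [List.length_cons, hw], ?_⟩
    rw [applyWord_cons, happ, rrefl_rrefl (hΦ.nonzero _ (hbase.simple_mem i))]

lemma wordDist_eq_of_forall_le {u : Fin ℓ → ℝ} {n : ℕ}
    (hw : ∃ w : List (Fin ℓ), w.length = n ∧ applyWord Δ w v = u)
    (hle : ∀ w : List (Fin ℓ), applyWord Δ w v = u → n ≤ w.length) : wordDist Δ v u = n :=
  le_antisymm (Nat.sInf_le hw) (le_csInf ⟨n, hw⟩ fun _ ⟨w, hlen, hwu⟩ => hlen ▸ hle w hwu)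

lemma wordDist_highest_eq (hΦ : IsCrystalRootSystem Φ) (hirr : IsIrreducibleRS Φ)
    (hsl : IsEqualLengthRS Φ) (hbase : IsBase Φ Δ C) (hα₀ : α₀ ∈ Φ)
    (hhighest : ∀ β ∈ Φ, htC C β ≤ htC C α₀) (hβ : β ∈ Φ) :
    (wordDist Δ α₀ β : ℤ) = shiftedHt C α₀ - shiftedHt C β := by
  obtain ⟨n, hn⟩ := Int.eq_ofNat_of_zero_le
    (sub_nonneg.mpr (shiftedHt_le_highest hΦ hbase hα₀ hhighest hβ))
  rw [hn, wordDist_eq_of_forall_le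
    (exists_word_of_shiftedHt_sub_eq hΦ hirr hsl hbase hα₀ hhighest n β hβ hn)]
  intro w hw
  have := shiftedHt_sub_length_le hΦ hsl hbase hα₀ w
  rw [hw] at this
  omega

end Words

/-- Lemma `M-V` of Reiner–Yun. Let `W` be the Weyl group of an
(irreducible) simply-laced root system `Φ` with positive roots determined by the base
`Δ`, and highest root `α₀`. Then for any root `α`, the minimum Coxeter length
`d(α₀, α)` of a `w ∈ W` with `w(α₀) = α` equals `ht(α₀) - ht(α)` when `α` is positive,
and `ht(α₀) - ht(α) - 1` when `α` is negative. -/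
theorem coset_length_eq_height_difference
    (ℓ : ℕ) (Φ : Finset (Fin ℓ → ℝ))
    (hΦ : IsCrystalRootSystem Φ) (hirr : IsIrreducibleRS Φ) (hsl : IsEqualLengthRS Φ)
    (Δ : Fin ℓ → (Fin ℓ → ℝ)) (C : (Fin ℓ → ℝ) → Fin ℓ → ℤ) (hbase : IsBase Φ Δ C)
    (α₀ : Fin ℓ → ℝ) (hα₀ : α₀ ∈ Φ) (hhighest : ∀ β ∈ Φ, htC C β ≤ htC C α₀)
    (α : Fin ℓ → ℝ) (hα : α ∈ Φ) :
    ((∀ i, 0 ≤ C α i) → (wordDist Δ α₀ α : ℤ) = htC C α₀ - htC C α) ∧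
    ((∀ i, C α i ≤ 0) → (wordDist Δ α₀ α : ℤ) = htC C α₀ - htC C α - 1) := by
  have hdist := wordDist_highest_eq hΦ hirr hsl hbase hα₀ hhighest hα
  rw [shiftedHt_of_pos (htC_highest_pos hΦ hbase hα₀ hhighest)] at hdist
  refine ⟨fun hpos => ?_, fun hneg => ?_⟩
  · rw [hdist, shiftedHt_of_pos (hbase.htC_pos_of_nonneg hΦ hα hpos)]
  · rw [hdist, shiftedHt_of_neg (hbase.htC_neg_of_nonpos hΦ hα hneg)]
    ring

end
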